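/- arXiv:1511.06568 — 2 statements merged into one kernel-verified Lean document; each statement's English description precedes it below -/
import Mathlib

section
/- Let S be a set of vertices of Q_n of size s with s ≥ 2n, and let d = ⌈n²/(2s − n − 2)⌉. Then there exists a set D ⊆ [n] with |D| = d such that |S ∩ V(Q_D(u))| ≤ d + 1 for every u ∈ {0,1}^{n−d}. -/
abbrev Vtx (n : ℕ) := Fin n → Bool

def cube (n : ℕ) : SimpleGraph (Vtx n) where
  Adj u v := hammingDist u v = 1
  symm := ⟨fun u v h => by rwa [hammingDist_comm]⟩
  loopless := ⟨fun u h => by simp [hammingDist_self] at h⟩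

def IsMatchingOn {V : Type*} (G : SimpleGraph V) (M : Finset (Sym2 V)) : Prop :=
  (∀ e ∈ M, e ∈ G.edgeSet) ∧
  ∀ e ∈ M, ∀ f ∈ M, e ≠ f → ∀ v : V, v ∈ e → v ∉ f

def mVerts {V : Type*} (M : Finset (Sym2 V)) : Set V := {v | ∃ e ∈ M, v ∈ e}

def flipAt {n : ℕ} (v : Vtx n) (d : Fin n) : Vtx n := Function.update v d (!(v d))

def subcubeVerts {n k : ℕ} (D : Finset (Fin n)) (h : Dᶜ.card = k)
    (u : Fin k → Bool) : Set (Vtx n) :=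
  {v | ∀ i : Fin k, v ((Dᶜ.orderIsoOfFin h i : Fin n)) = u i}

/-!
Identify a vertex of `Q_n` with the set of its `1`-coordinates; the vertices of `Q_D(u)` then
form a column `{s | s \ D = t}`. If the theorem failed, every `d`-set `D` would carry a column
with at least `d + 2` points of `S`. Down-compressions keep this property and `|S|`, so `S` may
be taken to be a down-set. Then the column `t = ∅` is the heaviest one, and sorting its members
by size (`∅`, singletons, larger sets) shows that the members of size at least two, seen as
hyperedges on `[n]`, satisfy: every `d`-set `D` contains at least `1 + |D ∩ τ|` of them, where
`τ` is the set of coordinates whose singleton is not in `S`. Removing the points of `τ` one at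
a time reduces this to the case `τ = ∅`, which is Turán's theorem in its Caro–Wei form, and
yields `n (n + d - 1) ≤ 2 (d - 1) (|S| - 1)`, contradicting the choice of `d`.
-/

open Finset
open scoped FinsetFamily

variable {α : Type*} [DecidableEq α]

lemma sum_inv_succ_le_one {ι : Type*} {s : Finset ι} {f : ι → ℕ} {δ : ℕ} (hs : #s ≤ δ + 1)
    (hf : ∀ i ∈ s, δ ≤ f i) : ∑ i ∈ s, ((f i : ℚ) + 1)⁻¹ ≤ 1 :=
  calc ∑ i ∈ s, ((f i : ℚ) + 1)⁻¹ ≤ ∑ _i ∈ s, ((δ : ℚ) + 1)⁻¹ := by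
        gcongr with i hi
        exact_mod_cast hf i hi
    _ = #s / ((δ : ℚ) + 1) := by rw [sum_const, nsmul_eq_mul, div_eq_mul_inv]
    _ ≤ 1 := by rw [div_le_one (by positivity)]; exact_mod_cast hs

lemma sum_card_filter_mem_eq_two_mul {V : Finset α} {P : Finset (Finset α)}
    (hP : ∀ p ∈ P, p ⊆ V ∧ #p = 2) : ∑ v ∈ V, #{p ∈ P | v ∈ p} = 2 * #P := by
  calc ∑ v ∈ V, #{p ∈ P | v ∈ p} = ∑ p ∈ P, #(V ∩ p) := by
        simp_rw [← filter_mem_eq_inter, card_eq_sum_ones, sum_filter]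
        exact sum_comm
    _ = 2 * #P := by
        rw [sum_congr rfl fun p hp => by rw [inter_eq_right.2 (hP p hp).1, (hP p hp).2],
          sum_const, smul_eq_mul, mul_comm]

theorem exists_indep_caroWei (V : Finset α) (P : Finset (Finset α))
    (hP : ∀ p ∈ P, p ⊆ V ∧ #p = 2) :
    ∃ I ⊆ V, (∀ p ∈ P, ¬p ⊆ I) ∧ ∑ v ∈ V, ((#{p ∈ P | v ∈ p} : ℚ) + 1)⁻¹ ≤ #I := by
  induction V using Finset.strongInduction generalizing P with
  | H V ih =>
  obtain rfl | hV := V.eq_empty_or_nonempty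
  · refine ⟨∅, subset_rfl, fun p hp hpI => ?_, by simp⟩
    simpa [subset_empty.1 hpI] using (hP p hp).2
  -- Greedy step: keep a vertex of minimum degree and delete its closed neighbourhood `R`,
  -- whose vertices contribute at most `1` to the sum.
  obtain ⟨v, hvV, hmin⟩ := exists_min_image V (fun u => #{p ∈ P | u ∈ p}) hV
  set R := insert v ({p ∈ P | v ∈ p}.biUnion (·.erase v))
  have hRV : R ⊆ V := insert_subset hvV <| biUnion_subset.2 fun p hp =>
    (erase_subset _ _).trans (hP p (mem_filter.1 hp).1).1
  have hR : #R ≤ #{p ∈ P | v ∈ p} + 1 := by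
    refine (card_insert_le _ _).trans (Nat.add_le_add_right (card_biUnion_le.trans_eq ?_) 1)
    rw [sum_congr rfl fun p hp => by
      rw [card_erase_of_mem (mem_filter.1 hp).2, (hP p (mem_filter.1 hp).1).2]]
    simp
  obtain ⟨I, hIV, hI, hsum⟩ := ih (V \ R) (sdiff_ssubset hRV ⟨v, mem_insert_self _ _⟩)
    {p ∈ P | p ⊆ V \ R} fun p hp => ⟨(mem_filter.1 hp).2, (hP p (mem_filter.1 hp).1).2⟩
  have hvI : v ∉ I := fun h => (mem_sdiff.1 (hIV h)).2 (mem_insert_self _ _)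
  refine ⟨insert v I, insert_subset hvV (hIV.trans sdiff_subset), fun p hp hpI => ?_, ?_⟩
  · by_cases hvp : v ∈ p
    · obtain ⟨x, hx⟩ : (p.erase v).Nonempty := by
        rw [← card_pos, card_erase_of_mem hvp, (hP p hp).2]; omega
      have hxR : x ∈ R := mem_insert_of_mem (mem_biUnion.2 ⟨p, mem_filter.2 ⟨hp, hvp⟩, hx⟩)
      have hxI : x ∈ I :=
        (mem_insert.1 (hpI (mem_of_mem_erase hx))).resolve_left (ne_of_mem_erase hx)
      exact (mem_sdiff.1 (hIV hxI)).2 hxR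
    · have hpI' : p ⊆ I := fun x hx =>
        (mem_insert.1 (hpI hx)).resolve_left fun h => hvp (h ▸ hx)
      exact hI p (mem_filter.2 ⟨hp, hpI'.trans hIV⟩) hpI'
  · have hRsum : ∑ u ∈ R, ((#{p ∈ P | u ∈ p} : ℚ) + 1)⁻¹ ≤ 1 :=
      sum_inv_succ_le_one hR fun u hu => hmin u (hRV hu)
    have hrest : ∑ u ∈ V \ R, ((#{p ∈ P | u ∈ p} : ℚ) + 1)⁻¹ ≤
        ∑ u ∈ V \ R, ((#{p ∈ {p ∈ P | p ⊆ V \ R} | u ∈ p} : ℚ) + 1)⁻¹ := by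
      gcongr with u
      exact filter_subset _ _
    rw [← sum_sdiff hRV, card_insert_of_notMem hvI]
    push_cast
    linarith

theorem sq_card_le_of_forall_exists_subset (V : Finset α) (H : Finset (Finset α)) (k : ℕ)
    (hH : ∀ A ∈ H, A ⊆ V ∧ 2 ≤ #A) (hcover : ∀ D ⊆ V, #D = k + 1 → ∃ A ∈ H, A ⊆ D) :
    #V ^ 2 ≤ k * (#V + 2 * #H) := by
  choose pair hpair using fun A (hA : A ∈ H) => exists_subset_card_eq (hH A hA).2
  set P := H.attach.image fun A => pair A.1 A.2
  have hP : ∀ p ∈ P, p ⊆ V ∧ #p = 2 := by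
    simp only [P, mem_image, mem_attach, true_and, Subtype.exists, forall_exists_index]
    rintro _ A hA rfl
    exact ⟨(hpair A hA).1.trans (hH A hA).1, (hpair A hA).2⟩
  obtain ⟨I, hIV, hI, hsum⟩ := exists_indep_caroWei V P hP
  have hIk : #I ≤ k := by
    by_contra! h
    obtain ⟨D, hDI, hD⟩ := exists_subset_card_eq (Nat.succ_le_of_lt h)
    obtain ⟨A, hA, hAD⟩ := hcover D (hDI.trans hIV) hD
    exact hI _ (mem_image_of_mem _ (mem_attach _ ⟨A, hA⟩)) ((hpair A hA).1.trans (hAD.trans hDI))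
  have hPH : #P ≤ #H := card_image_le.trans_eq (card_attach)
  have hdeg : ∑ v ∈ V, ((#{p ∈ P | v ∈ p} : ℚ) + 1) = #V + 2 * #P := by
    rw [sum_add_distrib, ← Nat.cast_sum, sum_card_filter_mem_eq_two_mul hP]
    simp [add_comm]
  have hsedrakyan := sq_sum_div_le_sum_sq_div V (fun _ => (1 : ℚ))
    (g := fun v => (#{p ∈ P | v ∈ p} : ℚ) + 1) fun _ _ => by positivity
  simp only [sum_const, nsmul_eq_mul, mul_one, one_pow, one_div, hdeg] at hsedrakyan
  rcases V.eq_empty_or_nonempty with rfl | hV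
  · simp
  have hpos : (0 : ℚ) < #V + 2 * #P := by have := hV.card_pos; positivity
  rw [div_le_iff₀ hpos] at hsedrakyan
  have hIk' : (#I : ℚ) ≤ k := by exact_mod_cast hIk
  have hPH' : (#P : ℚ) ≤ #H := by exact_mod_cast hPH
  exact_mod_cast calc ((#V : ℕ) : ℚ) ^ 2 ≤ _ := hsedrakyan
    _ ≤ k * (#V + 2 * #P) := by gcongr; exact hsum.trans hIk'
    _ ≤ k * (#V + 2 * #H) := by gcongr

section Extremal

variable {V τ : Finset α} {H : Finset (Finset α)} {k : ℕ} {v : α}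

lemma forall_card_erase_le_of_mem {A : Finset α} (hvτ : v ∈ τ) (hvA : v ∈ A)
    (hcond : ∀ D ⊆ V, #D = k + 1 → 1 + #(D ∩ τ) ≤ #{B ∈ H | B ⊆ D}) :
    ∀ D ⊆ V, #D = k + 1 → 1 + #(D ∩ τ.erase v) ≤ #{B ∈ H.erase A | B ⊆ D} := by
  intro D hDV hD
  have h := hcond D hDV hD
  rw [inter_erase, filter_erase]
  by_cases hvD : v ∈ D
  · have hv : v ∈ D ∩ τ := mem_inter.2 ⟨hvD, hvτ⟩
    have := pred_card_le_card_erase (s := {B ∈ H | B ⊆ D}) (a := A)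
    have := card_pos.2 ⟨v, hv⟩
    rw [card_erase_of_mem hv]
    omega
  · rwa [erase_eq_of_notMem fun h => hvD (mem_inter.1 h).1,
      erase_eq_of_notMem fun hA : A ∈ {B ∈ H | B ⊆ D} => hvD ((mem_filter.1 hA).2 hvA)]

lemma forall_card_erase_le_of_forall_notMem (hvV : v ∈ V) (hvτ : v ∈ τ) (hv : ∀ A ∈ H, v ∉ A)
    (hcond : ∀ D ⊆ V, #D = k + 2 → 1 + #(D ∩ τ) ≤ #{B ∈ H | B ⊆ D}) :
    ∀ D ⊆ V.erase v, #D = k + 1 → 1 + #(D ∩ τ.erase v) ≤ #{B ∈ H | B ⊆ D} := by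
  intro D hDV hD
  have hvD : v ∉ D := fun h => (mem_erase.1 (hDV h)).1 rfl
  have h := hcond (insert v D) (insert_subset hvV (hDV.trans (erase_subset _ _)))
    (by rw [card_insert_of_notMem hvD, hD])
  have hfilter : {B ∈ H | B ⊆ insert v D} = {B ∈ H | B ⊆ D} :=
    filter_congr fun B hB => subset_insert_iff_of_notMem (hv B hB)
  rw [insert_inter_of_mem hvτ, card_insert_of_notMem fun h => hvD (mem_inter.1 h).1,
    hfilter] at h
  rw [inter_erase, erase_eq_of_notMem fun h => hvD (mem_inter.1 h).1]
  omega

lemma exists_mem_of_forall_card_eq_two (hvV : v ∈ V) (hvτ : v ∈ τ) (hV : 2 ≤ #V)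
    (hH : ∀ A ∈ H, 2 ≤ #A)
    (hcond : ∀ D ⊆ V, #D = 2 → 1 + #(D ∩ τ) ≤ #{B ∈ H | B ⊆ D}) : ∃ A ∈ H, v ∈ A := by
  obtain ⟨w, hw⟩ : (V.erase v).Nonempty := by rw [← card_pos, card_erase_of_mem hvV]; omega
  have hwv : w ≠ v := ne_of_mem_erase hw
  have hD : #{v, w} = 2 := card_pair hwv.symm
  have h := hcond {v, w} (insert_subset hvV (singleton_subset_iff.2 (mem_of_mem_erase hw))) hD
  have : 0 < #({v, w} ∩ τ) := card_pos.2 ⟨v, mem_inter.2 ⟨mem_insert_self _ _, hvτ⟩⟩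
  obtain ⟨A, hA⟩ : ({B ∈ H | B ⊆ {v, w}} : Finset _).Nonempty := card_pos.1 (by omega)
  obtain ⟨hAH, hAD⟩ := mem_filter.1 hA
  have hA : A = {v, w} := eq_of_subset_of_card_le hAD (hD.trans_le (hH A hAH))
  exact ⟨A, hAH, hA ▸ mem_insert_self _ _⟩

lemma succ_mul_add_le_of_mul_add_le {m k c : ℕ} (hk : 1 ≤ k) (hm : 3 * (k + 1) ≤ m + 1)
    (h : m * (m + k) ≤ 2 * k * c) : (m + 1) * (m + 1 + (k + 1)) ≤ 2 * (k + 1) * c := by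
  have hkey : k * ((m + 1) * (m + 1 + (k + 1))) ≤ k * (2 * (k + 1) * c) := by
    nlinarith
  exact le_of_mul_le_mul_left hkey (by omega)

theorem mul_add_le_of_forall_card_filter_subset (hk : 1 ≤ k) (hτV : τ ⊆ V)
    (hH : ∀ A ∈ H, A ⊆ V ∧ 2 ≤ #A) (hV : 3 * k ≤ #V)
    (hcond : ∀ D ⊆ V, #D = k + 1 → 1 + #(D ∩ τ) ≤ #{A ∈ H | A ⊆ D}) :
    #V * (#V + k) ≤ 2 * k * (#H + #(V \ τ)) := by
  -- A vertex of `τ` lying in some `A ∈ H` leaves `τ` at the cost of `A`; a vertex of `τ` in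
  -- no member of `H` is deleted from `V`, lowering `k`.
  induction τ using Finset.strongInduction generalizing V H k with
  | H τ ih =>
  obtain rfl | ⟨v, hvτ⟩ := τ.eq_empty_or_nonempty
  · have hturan := sq_card_le_of_forall_exists_subset V H k hH fun D hDV hD => by
      have h := hcond D hDV hD
      rw [inter_empty, card_empty] at h
      obtain ⟨A, hA⟩ := card_pos.1 (h.trans_lt' one_pos)
      exact ⟨A, (mem_filter.1 hA).1, (mem_filter.1 hA).2⟩
    rw [sdiff_empty]
    nlinarith
  have hvV := hτV hvτ
  have hvVτ : v ∉ V \ τ := fun h => (mem_sdiff.1 h).2 hvτ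
  by_cases hv : ∃ A ∈ H, v ∈ A
  · obtain ⟨A, hAH, hvA⟩ := hv
    have h := ih (τ.erase v) (erase_ssubset hvτ) hk ((erase_subset _ _).trans hτV)
      (fun B hB => hH B (mem_of_mem_erase hB)) hV (forall_card_erase_le_of_mem hvτ hvA hcond)
    rw [card_erase_of_mem hAH, sdiff_erase hvV, card_insert_of_notMem hvVτ] at h
    have hcard : #H - 1 + (#(V \ τ) + 1) = #H + #(V \ τ) := by
      have := card_pos.2 ⟨A, hAH⟩
      omega
    rwa [hcard] at h
  push Not at hv
  obtain rfl | ⟨k, rfl⟩ : k = 1 ∨ ∃ k', k = k' + 1 + 1 := by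
    rcases k with _ | _ | k <;> simp_all
  · exact absurd (exists_mem_of_forall_card_eq_two hvV hvτ (by omega)
      (fun A hA => (hH A hA).2) hcond) (by simpa using hv)
  have h := ih (τ.erase v) (erase_ssubset hvτ) (V := V.erase v) (k := k + 1) (by omega)
    (erase_subset_erase v hτV)
    (fun B hB => ⟨subset_erase.2 ⟨(hH B hB).1, hv B hB⟩, (hH B hB).2⟩)
    (by rw [card_erase_of_mem hvV]; omega)
    (forall_card_erase_le_of_forall_notMem hvV hvτ hv hcond)
  rw [erase_sdiff_comm, sdiff_erase hvV, erase_insert hvVτ] at h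
  rw [← card_erase_add_one hvV]
  exact succ_mul_add_le_of_mul_add_le (by omega) (by rw [card_erase_add_one hvV]; omega) h

end Extremal

section Compression

variable {𝒜 : Finset (Finset α)} {a : α}

lemma filter_compression_of_mem {D t : Finset α} (ha : a ∈ D) :
    {s ∈ 𝓓 a 𝒜 | s \ D = t} = 𝓓 a {s ∈ 𝒜 | s \ D = t} := by
  have herase (s : Finset α) : s.erase a \ D = s \ D := by
    rw [erase_sdiff_comm, erase_eq_of_notMem fun h => (mem_sdiff.1 h).2 ha]
  ext s
  simp only [mem_filter, Down.mem_compression, herase, insert_sdiff_of_mem _ ha]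
  tauto

lemma exists_card_filter_sdiff_eq_le_compression (D t : Finset α) :
    ∃ t', #{s ∈ 𝒜 | s \ D = t} ≤ #{s ∈ 𝓓 a 𝒜 | s \ D = t'} := by
  by_cases ha : a ∈ D
  · exact ⟨t, by rw [filter_compression_of_mem ha, Down.card_compression]⟩
  refine ⟨t.erase a, card_le_card_of_injOn (·.erase a) (fun s hs => ?_) fun s₁ hs₁ s₂ hs₂ h => ?_⟩
  · obtain ⟨hs𝒜, rfl⟩ := mem_filter.1 hs
    exact mem_filter.2 ⟨Down.erase_mem_compression hs𝒜, erase_sdiff_comm _ _ _⟩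
  · obtain ⟨-, hs₁⟩ := mem_filter.1 hs₁
    obtain ⟨-, hs₂⟩ := mem_filter.1 hs₂
    have hmem {s : Finset α} (hs : s \ D = t) : a ∈ s ↔ a ∈ t := by simp [← hs, ha]
    change s₁.erase a = s₂.erase a at h
    by_cases hat : a ∈ t
    · rw [← insert_erase ((hmem hs₁).2 hat), ← insert_erase ((hmem hs₂).2 hat)]
      exact congrArg (insert a) h
    · rwa [erase_eq_of_notMem (mt (hmem hs₁).1 hat), erase_eq_of_notMem (mt (hmem hs₂).1 hat)]
        at h

lemma sum_card_compression_lt (h : ∃ s ∈ 𝒜, a ∈ s ∧ s.erase a ∉ 𝒜) :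
    ∑ s ∈ 𝓓 a 𝒜, #s < ∑ s ∈ 𝒜, #s := by
  have hmem : ∀ s ∈ {s ∈ 𝒜 | s.erase a ∉ 𝒜}, a ∈ s := fun s hs => by
    by_contra has
    exact (mem_filter.1 hs).2 (by rw [erase_eq_of_notMem has]; exact (mem_filter.1 hs).1)
  have hinj : Set.InjOn (fun s : Finset α => s.erase a)
      ({s ∈ 𝒜 | s.erase a ∉ 𝒜} : Finset (Finset α)) := fun s₁ h₁ s₂ h₂ h => by
    change s₁.erase a = s₂.erase a at h
    rw [← insert_erase (hmem s₁ h₁), ← insert_erase (hmem s₂ h₂)]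
    exact congrArg (insert a) h
  have hlt : ∑ s ∈ {s ∈ 𝒜 | s.erase a ∉ 𝒜}, #(s.erase a) < ∑ s ∈ {s ∈ 𝒜 | s.erase a ∉ 𝒜}, #s := by
    obtain ⟨s, hs, has, hs'⟩ := h
    exact sum_lt_sum_of_nonempty ⟨s, mem_filter.2 ⟨hs, hs'⟩⟩ fun s hs =>
      card_erase_lt_of_mem (hmem s hs)
  rw [Down.compression, sum_disjUnion, filter_image, sum_image hinj,
    ← sum_filter_add_sum_filter_not 𝒜 (fun s => s.erase a ∈ 𝒜)]
  omega

lemma isLowerSet_of_forall_erase_mem (h : ∀ s ∈ 𝒜, ∀ a ∈ s, s.erase a ∈ 𝒜) :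
    IsLowerSet (𝒜 : Set (Finset α)) := by
  intro s t hts hs
  induction s using Finset.strongInduction with
  | H s ih =>
  obtain rfl | hts := eq_or_ssubset_of_subset hts
  · exact hs
  obtain ⟨a, has, hat⟩ := exists_of_ssubset hts
  exact ih _ (erase_ssubset has) (subset_erase.2 ⟨hts.subset, hat⟩) (h s hs a has)

theorem exists_isLowerSet_of_compression (P : Finset (Finset α) → Prop)
    (hP : ∀ a ℬ, P ℬ → P (𝓓 a ℬ)) (h𝒜 : P 𝒜) :
    ∃ ℬ : Finset (Finset α), IsLowerSet (ℬ : Set (Finset α)) ∧ #ℬ = #𝒜 ∧ P ℬ := by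
  induction hw : ∑ s ∈ 𝒜, #s using Nat.strong_induction_on generalizing 𝒜 with
  | _ w ih =>
  by_cases hdown : ∃ s ∈ 𝒜, ∃ a ∈ s, s.erase a ∉ 𝒜
  · obtain ⟨s, hs, a, has, hs'⟩ := hdown
    obtain ⟨ℬ, hℬ, hcard, hPℬ⟩ := ih _ (hw ▸ sum_card_compression_lt ⟨s, hs, has, hs'⟩)
      (hP a 𝒜 h𝒜) rfl
    exact ⟨ℬ, hℬ, hcard.trans (Down.card_compression a 𝒜), hPℬ⟩
  push Not at hdown
  exact ⟨𝒜, isLowerSet_of_forall_erase_mem hdown, rfl, h𝒜⟩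

end Compression

lemma injOn_inter_filter_sdiff_eq (𝒜 : Finset (Finset α)) (D t : Finset α) :
    Set.InjOn (· ∩ D) ({s ∈ 𝒜 | s \ D = t} : Finset (Finset α)) := fun s₁ hs₁ s₂ hs₂ h => by
  rw [← sdiff_union_inter s₁ D, ← sdiff_union_inter s₂ D, (mem_filter.1 hs₁).2,
    (mem_filter.1 hs₂).2]
  exact congrArg (t ∪ ·) h

lemma card_filter_sdiff_eq_le_two_pow (𝒜 : Finset (Finset α)) (D t : Finset α) :
    #{s ∈ 𝒜 | s \ D = t} ≤ 2 ^ #D := by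
  rw [← card_powerset]
  exact card_le_card_of_injOn (· ∩ D) (fun _ _ => mem_powerset.2 inter_subset_right)
    (injOn_inter_filter_sdiff_eq 𝒜 D t)

lemma IsLowerSet.card_filter_sdiff_eq_le {𝒜 : Finset (Finset α)}
    (h𝒜 : IsLowerSet (𝒜 : Set (Finset α))) (D t : Finset α) :
    #{s ∈ 𝒜 | s \ D = t} ≤ #{s ∈ 𝒜 | s ⊆ D} := by
  refine card_le_card_of_injOn (· ∩ D) (fun s hs => ?_) (injOn_inter_filter_sdiff_eq 𝒜 D t)
  exact mem_filter.2 ⟨h𝒜 inter_subset_left (mem_filter.1 hs).1, inter_subset_right⟩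

lemma card_eq_card_filter_eq_empty_add (ℬ : Finset (Finset α)) (U : Finset α)
    (hU : ∀ s ∈ ℬ, s ⊆ U) :
    #ℬ = #{s ∈ ℬ | s = ∅} + #{a ∈ U | {a} ∈ ℬ} + #{s ∈ ℬ | 2 ≤ #s} := by
  have hsingleton : #{a ∈ U | {a} ∈ ℬ} = #{s ∈ ℬ | #s = 1} := by
    rw [← card_image_of_injective _ singleton_injective]
    congr 1
    ext s
    simp only [mem_image, mem_filter, card_eq_one]
    constructor
    · rintro ⟨a, ⟨-, ha⟩, rfl⟩
      exact ⟨ha, a, rfl⟩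
    · rintro ⟨hs, a, rfl⟩
      exact ⟨a, ⟨hU _ hs (mem_singleton_self a), hs⟩, rfl⟩
  rw [hsingleton, ← card_filter_add_card_filter_not (fun s => #s < 2) (s := ℬ),
    ← card_filter_add_card_filter_not (fun s => s = ∅) (s := {s ∈ ℬ | #s < 2})]
  simp only [filter_filter, not_lt]
  congr 3 <;> ext s <;> simp only [mem_filter, and_congr_right_iff, ← card_eq_zero] <;> omega

section HeavyColumns

variable {𝒜 : Finset (Finset α)}

def HasHeavyColumns (d : ℕ) (𝒜 : Finset (Finset α)) : Prop :=
  ∀ D : Finset α, #D = d → ∃ t, d + 2 ≤ #{s ∈ 𝒜 | s \ D = t}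

lemma HasHeavyColumns.compression {d : ℕ} (h : HasHeavyColumns d 𝒜) (a : α) :
    HasHeavyColumns d (𝓓 a 𝒜) := fun D hD => by
  obtain ⟨t, ht⟩ := h D hD
  obtain ⟨t', ht'⟩ := exists_card_filter_sdiff_eq_le_compression (𝒜 := 𝒜) (a := a) D t
  exact ⟨t', ht.trans ht'⟩

lemma IsLowerSet.one_add_card_filter_le {k : ℕ} (h𝒜 : IsLowerSet (𝒜 : Set (Finset α)))
    (hheavy : HasHeavyColumns (k + 1) 𝒜) {D : Finset α} (hD : #D = k + 1) :
    1 + #{a ∈ D | {a} ∉ 𝒜} ≤ #{A ∈ {s ∈ 𝒜 | 2 ≤ #s} | A ⊆ D} := by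
  obtain ⟨t, ht⟩ := hheavy D hD
  have hcolumn := h𝒜.card_filter_sdiff_eq_le D t
  have hsplit := card_eq_card_filter_eq_empty_add {s ∈ 𝒜 | s ⊆ D} D fun s hs => (mem_filter.1 hs).2
  have hempty : #{s ∈ {s ∈ 𝒜 | s ⊆ D} | s = ∅} ≤ 1 :=
    card_le_one.2 fun s hs s' hs' => by rw [(mem_filter.1 hs).2, (mem_filter.1 hs').2]
  have hsingleton : {a ∈ D | {a} ∈ {s ∈ 𝒜 | s ⊆ D}} = {a ∈ D | {a} ∈ 𝒜} :=
    filter_congr fun a ha => by simp [ha]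
  have hlarge : {s ∈ {s ∈ 𝒜 | s ⊆ D} | 2 ≤ #s} = {A ∈ {s ∈ 𝒜 | 2 ≤ #s} | A ⊆ D} := by
    simp only [filter_filter, and_comm]
  have hD' := card_filter_add_card_filter_not (fun a => {a} ∈ 𝒜) (s := D)
  rw [hsingleton, hlarge] at hsplit
  omega

theorem mul_add_le_of_hasHeavyColumns [Fintype α] {k : ℕ} (hk : 1 ≤ k)
    (hn : 3 * k ≤ Fintype.card α) (h : HasHeavyColumns (k + 1) 𝒜) :
    Fintype.card α * (Fintype.card α + k) + 2 * k ≤ 2 * k * #𝒜 := by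
  obtain ⟨ℬ, hℬ, hcard, hheavy⟩ :=
    exists_isLowerSet_of_compression _ (fun a _ h => h.compression a) h
  obtain ⟨D, -, hD⟩ := exists_subset_card_eq (s := (univ : Finset α)) (n := k + 1) (by simp; omega)
  obtain ⟨t, ht⟩ := hheavy D hD
  obtain ⟨s, hs⟩ : ℬ.Nonempty := by
    obtain ⟨s, hs⟩ := card_pos.1 (ht.trans_lt' (by omega))
    exact ⟨s, (mem_filter.1 hs).1⟩
  have hempty : {s ∈ ℬ | s = ∅} = {∅} := by
    rw [filter_eq', if_pos (mem_coe.1 (hℬ (empty_subset s) hs))]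
  have hextremal := mul_add_le_of_forall_card_filter_subset (V := univ)
    (τ := {a | {a} ∉ ℬ}) (H := {s ∈ ℬ | 2 ≤ #s}) hk (subset_univ _)
    (fun A hA => ⟨subset_univ _, (mem_filter.1 hA).2⟩) (by rwa [card_univ])
    fun D _ hD => by
      rw [inter_filter, inter_univ]
      exact hℬ.one_add_card_filter_le hheavy hD
  have hcount := card_eq_card_filter_eq_empty_add ℬ univ fun _ _ => subset_univ _
  rw [hempty, card_singleton] at hcount
  have hsingletons : univ \ ({a | {a} ∉ ℬ} : Finset α) = ({a | {a} ∈ ℬ} : Finset α) := by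
    ext; simp
  rw [hsingletons, card_univ] at hextremal
  rw [← hcard, hcount]
  nlinarith

end HeavyColumns

section Arithmetic

variable {n s k : ℕ}

lemma ceil_sq_div_le (hs : 2 * n ≤ s) : ⌈(n : ℚ) ^ 2 / (2 * s - n - 2)⌉₊ ≤ n := by
  rcases n.eq_zero_or_pos with rfl | hn
  · simp
  have hs' : (2 * n : ℚ) ≤ s := by exact_mod_cast hs
  have hn' : (1 : ℚ) ≤ n := by exact_mod_cast hn
  rw [Nat.ceil_le, div_le_iff₀ (by linarith)]
  nlinarith

lemma mul_lt_sq_of_lt_ceil (hs : 2 * n ≤ s) (hk : k < ⌈(n : ℚ) ^ 2 / (2 * s - n - 2)⌉₊) :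
    0 < n ∧ (k : ℚ) * (2 * s - n - 2) < n ^ 2 := by
  rcases n.eq_zero_or_pos with rfl | hn
  · simp at hk
  have hs' : (2 * n : ℚ) ≤ s := by exact_mod_cast hs
  have hn' : (1 : ℚ) ≤ n := by exact_mod_cast hn
  exact ⟨hn, (lt_div_iff₀ (by linarith)).1 (Nat.lt_ceil.1 hk)⟩

lemma three_mul_le_of_lt_ceil (hs : 2 * n ≤ s) (hk : k < ⌈(n : ℚ) ^ 2 / (2 * s - n - 2)⌉₊) :
    3 * k ≤ n := by
  obtain ⟨hn, hlt⟩ := mul_lt_sq_of_lt_ceil hs hk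
  have hs' : (2 * n : ℚ) ≤ s := by exact_mod_cast hs
  have hn' : (1 : ℚ) ≤ n := by exact_mod_cast hn
  by_contra! h
  have h' : (n : ℚ) + 1 ≤ 3 * k := by exact_mod_cast h
  have hden : (0 : ℚ) ≤ 2 * s - n - 2 := by linarith
  have hn1 : n = 1 := by
    have : (n : ℚ) < 2 := by nlinarith [mul_le_mul_of_nonneg_right h' hden]
    have : n < 2 := by exact_mod_cast this
    omega
  subst hn1
  have hk1 : (1 : ℚ) ≤ k := by exact_mod_cast (by omega : 1 ≤ k)
  push_cast at hlt hs'
  nlinarith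

lemma not_mul_add_le_of_lt_ceil (hs : 2 * n ≤ s) (hk : k < ⌈(n : ℚ) ^ 2 / (2 * s - n - 2)⌉₊) :
    ¬n * (n + k) + 2 * k ≤ 2 * k * s := by
  obtain ⟨-, hlt⟩ := mul_lt_sq_of_lt_ceil hs hk
  intro h
  have h' : (n : ℚ) * (n + k) + 2 * k ≤ 2 * k * s := by exact_mod_cast h
  nlinarith

end Arithmetic

theorem exists_card_filter_sdiff_eq_le [Fintype α] (𝒜 : Finset (Finset α))
    (hs : 2 * Fintype.card α ≤ #𝒜) {d : ℕ}
    (hd : d = ⌈(Fintype.card α : ℚ) ^ 2 / (2 * #𝒜 - Fintype.card α - 2)⌉₊) :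
    ∃ D : Finset α, #D = d ∧ ∀ t, #{s ∈ 𝒜 | s \ D = t} ≤ d + 1 := by
  by_cases hd1 : d ≤ 1
  · obtain ⟨D, -, hD⟩ := exists_subset_card_eq (s := (univ : Finset α)) (n := d)
      (by rw [card_univ, hd]; exact ceil_sq_div_le hs)
    refine ⟨D, hD, fun t => (card_filter_sdiff_eq_le_two_pow 𝒜 D t).trans ?_⟩
    rw [hD]
    interval_cases d <;> norm_num
  by_contra! hcon
  obtain ⟨k, rfl⟩ : ∃ k, d = k + 1 := ⟨d - 1, by omega⟩
  have hk : k < ⌈(Fintype.card α : ℚ) ^ 2 / (2 * #𝒜 - Fintype.card α - 2)⌉₊ := by omega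
  exact not_mul_add_le_of_lt_ceil hs hk <|
    mul_add_le_of_hasHeavyColumns (by omega) (three_mul_le_of_lt_ceil hs hk) hcon

section Hypercube

variable {n : ℕ}

def ones (v : Vtx n) : Finset (Fin n) := {i | v i = true}

lemma mem_ones {v : Vtx n} {i : Fin n} : i ∈ ones v ↔ v i = true := by simp [ones]

lemma ones_injective : Function.Injective (ones (n := n)) := fun v w h =>
  funext fun i => Bool.eq_iff_iff.2 (by rw [← mem_ones, ← mem_ones, h])

lemma ones_sdiff_eq_iff {D : Finset (Fin n)} {v w : Vtx n} :
    ones v \ D = ones w \ D ↔ ∀ j ∉ D, v j = w j := by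
  simp only [Finset.ext_iff, mem_sdiff, mem_ones]
  refine ⟨fun h j hj => Bool.eq_iff_iff.2 ?_, fun h j => ?_⟩
  · simpa [hj] using h j
  · by_cases hj : j ∈ D <;> simp [hj, h]

lemma exists_subcubeVerts_eq (D : Finset (Fin n)) {k : ℕ} (hc : Dᶜ.card = k)
    (u : Fin k → Bool) : ∃ w : Vtx n, subcubeVerts D hc u = {v | ∀ j ∉ D, v j = w j} := by
  set e := Dᶜ.orderIsoOfFin hc
  refine ⟨fun j => if hj : j ∈ Dᶜ then u (e.symm ⟨j, hj⟩) else false, ?_⟩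
  ext v
  simp only [subcubeVerts, Set.mem_ofPred_eq]
  constructor
  · intro hv j hj
    have hj' : j ∈ Dᶜ := mem_compl.2 hj
    rw [dif_pos hj', ← hv]
    simp [e]
  · intro hv i
    rw [hv (e i) (mem_compl.1 (e i).2), dif_pos (e i).2]
    simp

lemma exists_ncard_inter_subcubeVerts_eq (S : Finset (Vtx n)) (D : Finset (Fin n)) {k : ℕ}
    (hc : Dᶜ.card = k) (u : Fin k → Bool) :
    ∃ t, ((S : Set (Vtx n)) ∩ subcubeVerts D hc u).ncard = #{s ∈ S.image ones | s \ D = t} := by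
  obtain ⟨w, hw⟩ := exists_subcubeVerts_eq D hc u
  refine ⟨ones w \ D, ?_⟩
  rw [filter_image, card_image_of_injective _ ones_injective, ← Set.ncard_coe_finset, hw]
  congr 1
  ext v
  simp [ones_sdiff_eq_iff]

end Hypercube

theorem wiener_partition
    (n sN : ℕ) (S : Finset (Vtx n)) (hS : S.card = sN) (hs : 2 * n ≤ sN)
    (d : ℕ) (hd : d = ⌈(n : ℚ)^2 / (2 * (sN : ℚ) - (n : ℚ) - 2)⌉₊) :
    ∃ (D : Finset (Fin n)) (_ : D.card = d) (hc : Dᶜ.card = n - d),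
      ∀ u : Fin (n - d) → Bool,
        ((S : Set (Vtx n)) ∩ subcubeVerts D hc u).ncard ≤ d + 1 := by
  have hcard : #(S.image ones) = sN := by rw [card_image_of_injective _ ones_injective, hS]
  obtain ⟨D, hD, hcolumns⟩ := exists_card_filter_sdiff_eq_le (S.image ones) (d := d)
    (by rwa [hcard, Fintype.card_fin]) (by rw [hd, hcard, Fintype.card_fin])
  refine ⟨D, hD, by rw [card_compl, Fintype.card_fin, hD], fun u => ?_⟩
  obtain ⟨t, ht⟩ := exists_ncard_inter_subcubeVerts_eq S D _ u
  exact ht ▸ hcolumns t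
end

section
/- Let n ≥ 2, d ∈ [n], and let Q⁰ and Q¹ be the two (n−1)-dimensional subcubes of Q_n induced by the vertices whose d-th coordinate is 0, respectively 1. Let M be a matching in K(Q_n), write M⁰ = M ∩ E(K(Q⁰)), M¹ = M ∩ E(K(Q¹)), and suppose the remaining edges of M are M² = {u₁v₁, u₂v₂, …, u_k v_k} with k even, k ≥ 2, u_i ∈ V(Q⁰) and v_i ∈ V(Q¹) for all i. Suppose: (i) P⁰ is a perfect matching of the complete graph on {u₁,…,u_k} and C⁰ is a cycle in K(Q⁰) with E(C⁰) = M⁰ ∪ P⁰ ∪ S⁰ for some S⁰ ⊆ E(Q⁰); (ii) P¹ is a perfect matching of the complete graph on {v₁,…,v_k} such that for every edge v_i v_j ∈ P¹ the vertices u_i and u_j are the two endpoints of a common path component of the graph obtained from C⁰ by deleting the edges of P⁰; (iii) C¹ is a cycle in K(Q¹) with E(C¹) = M¹ ∪ P¹ ∪ S¹ for some S¹ ⊆ E(Q¹). Then there is a cycle C in K(Q_n) such that E(C) = M ∪ S for some S ⊆ E(Q_n) and |V(C)| = |V(C⁰)| + |V(C¹)|. -/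
namespace SimpleGraph

variable {V : Type*} {G H P Q : SimpleGraph V}

theorem Walk.reachable_of_forall_edges {a b : V} (p : G.Walk a b)
    (h : ∀ x y, s(x, y) ∈ p.edges → H.Reachable x y) : H.Reachable a b := by
  induction p with
  | nil => rfl
  | cons _ p ih =>
    simp only [Walk.edges_cons, List.mem_cons] at h
    exact (h _ _ (.inl rfl)).trans (ih fun x y hxy => h x y (.inr hxy))

theorem Walk.reachable_of_mem_support {a b x y : V} (p : G.Walk a b)
    (h : ∀ x y, s(x, y) ∈ p.edges → H.Reachable x y) (hx : x ∈ p.support)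
    (hy : y ∈ p.support) : H.Reachable x y := by
  classical
  have hstart : ∀ z (hz : z ∈ p.support), H.Reachable a z := fun z hz =>
    (p.takeUntil z hz).reachable_of_forall_edges fun x y hxy =>
      h x y (p.edges_takeUntil_subset_edges hz hxy)
  exact (hstart x hx).symm.trans (hstart y hy)

theorem Walk.support_spanningCoe_toSubgraph_subset {a b : V} (p : G.Walk a b) :
    p.toSubgraph.spanningCoe.support ⊆ {x | x ∈ p.support} := fun _ ⟨_, hxy⟩ =>
  p.fst_mem_support_of_mem_edges (p.adj_toSubgraph_iff_mem_edges.mp hxy)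

theorem Walk.disjoint_edgeSet_of_disjoint_support {a b c d : V} {p : G.Walk a b}
    {q : G.Walk c d} (hpq : p.support.Disjoint q.support) : Disjoint p.edgeSet q.edgeSet :=
  Set.disjoint_left.mpr fun e hp hq => by
    induction e using Sym2.ind with
    | _ x y => exact hpq (p.fst_mem_support_of_mem_edges hp) (q.fst_mem_support_of_mem_edges hq)

theorem Walk.mk_notMem_edgeSet_union_of_disjoint_support {a b c d x y : V} {p : G.Walk a b}
    {q : G.Walk c d} (hpq : p.support.Disjoint q.support) (hx : x ∈ p.support)
    (hy : y ∈ q.support) : s(x, y) ∉ p.edgeSet ∪ q.edgeSet := by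
  rintro (h | h)
  · exact hpq (p.snd_mem_support_of_mem_edges h) hy
  · exact hpq hx (q.fst_mem_support_of_mem_edges h)

theorem Walk.IsTrail.length_eq_ncard_edgeSet {a b : V} {p : G.Walk a b} (hp : p.IsTrail) :
    p.length = p.edgeSet.ncard := by
  classical
  rw [← p.coe_edges_toFinset, Set.ncard_coe_finset, List.toFinset_card_of_nodup hp.edges_nodup,
    p.length_edges]

theorem Walk.IsTrail.ncard_edgeSet_union {a b c d : V} {p : G.Walk a b} {q : G.Walk c d}
    (hp : p.IsTrail) (hq : q.IsTrail) (hpq : p.support.Disjoint q.support) :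
    (p.edgeSet ∪ q.edgeSet).ncard = p.length + q.length := by
  rw [Set.ncard_union_eq (disjoint_edgeSet_of_disjoint_support hpq) p.edges.finite_toSet
    q.edges.finite_toSet, hp.length_eq_ncard_edgeSet, hq.length_eq_ncard_edgeSet]

theorem edgeSet_sdiff_fromEdgeSet_sup_fromEdgeSet {s t : Set (Sym2 V)}
    (ht : Disjoint t Sym2.diagSet) :
    (G \ fromEdgeSet s ⊔ fromEdgeSet t).edgeSet = G.edgeSet \ s ∪ t := by
  rw [edgeSet_sup, edgeSet_sdiff, edgeSet_fromEdgeSet, edgeSet_sdiff_sdiff_isDiag,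
    edgeSet_fromEdgeSet, sdiff_eq_left.mpr ht]

theorem IsCycles.sup (hG : G.IsCycles) (hH : H.IsCycles) (hGH : Disjoint G.support H.support) :
    (G ⊔ H).IsCycles := by
  have hempty : ∀ {K : SimpleGraph V} {x}, x ∉ K.support → K.neighborSet x = ∅ := fun hx =>
    ((notMem_support_iff_isIsolated _).mp hx).neighborSet_eq_empty
  intro x hx
  rw [neighborSet_sup] at hx ⊢
  by_cases hxG : x ∈ G.support
  · rw [hempty (hGH.notMem_of_mem_left hxG), Set.union_empty] at hx ⊢
    exact hG hx
  · rw [hempty hxG, Set.empty_union] at hx ⊢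
    exact hH hx

theorem ncard_neighborSet_sdiff_sup [Finite V] (hPG : P ≤ G) (hGQ : Disjoint G Q)
    (hPQ : ∀ x, (P.neighborSet x).ncard = (Q.neighborSet x).ncard) (x : V) :
    ((G \ P ⊔ Q).neighborSet x).ncard = (G.neighborSet x).ncard := by
  have hdisj : Disjoint (G.neighborSet x \ P.neighborSet x) (Q.neighborSet x) :=
    (disjoint_neighborSet.mpr hGQ x).mono_left Set.sdiff_subset
  have hsub : P.neighborSet x ⊆ G.neighborSet x := fun _ h => hPG h
  rw [neighborSet_sup, neighborSet_sdiff, Set.ncard_union_eq hdisj, Set.ncard_sdiff hsub, ← hPQ]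
  have := Set.ncard_le_ncard hsub
  omega

theorem IsCycles.sdiff_sup [Finite V] (hG : G.IsCycles) (hPG : P ≤ G) (hGQ : Disjoint G Q)
    (hPQ : ∀ x, (P.neighborSet x).ncard = (Q.neighborSet x).ncard) : (G \ P ⊔ Q).IsCycles := by
  intro x hx
  rw [← Set.ncard_pos (Set.toFinite _), ncard_neighborSet_sdiff_sup hPG hGQ hPQ,
    Set.ncard_pos (Set.toFinite _)] at hx
  rw [ncard_neighborSet_sdiff_sup hPG hGQ hPQ]
  exact hG hx

theorem ncard_edgeSet_eq_of_ncard_neighborSet_eq [Finite V]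
    (h : ∀ x, (G.neighborSet x).ncard = (H.neighborSet x).ncard) :
    G.edgeSet.ncard = H.edgeSet.ncard := by
  classical
  have := Fintype.ofFinite V
  have hsum : ∀ K : SimpleGraph V, 2 * K.edgeSet.ncard = ∑ x, (K.neighborSet x).ncard :=
    fun K => by
      rw [← coe_edgeFinset, Set.ncard_coe_finset, ← sum_degrees_eq_twice_card_edges]
      simp only [← card_neighborSet_eq_degree, Set.fintypeCard_eq_ncard]
  have := hsum G
  rw [Finset.sum_congr rfl fun x _ => h x, ← hsum H] at this
  omega

theorem IsCycles.exists_isCycle_edgeSet_eq [Finite V] (hG : G.IsCycles)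
    (hconn : ∀ a b c d, G.Adj a b → G.Adj c d → G.Reachable a c) {a b : V} (hab : G.Adj a b) :
    ∃ p : G.Walk a a, p.IsCycle ∧ p.edgeSet = G.edgeSet := by
  classical
  have := Fintype.ofFinite V
  obtain ⟨p, hp, hverts⟩ := hG.exists_cycle_toSubgraph_verts_eq_connectedComponentSupp
    (c := G.connectedComponentMk a) rfl ⟨b, hab⟩
  refine ⟨p, hp, ?_⟩
  ext e
  induction e using Sym2.ind with
  | _ x y =>
    rw [← Walk.edgeSet_toSubgraph, Subgraph.mem_edgeSet, mem_edgeSet]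
    refine ⟨fun h => h.adj_sub, fun hxy => ?_⟩
    have hx : x ∈ p.toSubgraph.verts := by
      rw [hverts, ConnectedComponent.mem_supp_iff, ConnectedComponent.eq]
      exact (hconn a b x y hab hxy).symm
    exact (hp.adj_toSubgraph_iff_of_isCycles hG hx y).mpr hxy

theorem IsCycles.exists_isCycle_sdiff_sup [Finite V] (hG : G.IsCycles) (hPG : P ≤ G)
    (hGQ : Disjoint G Q) (hPQ : ∀ x, (P.neighborSet x).ncard = (Q.neighborSet x).ncard)
    (hconn : ∀ a b c d, (G \ P ⊔ Q).Adj a b → (G \ P ⊔ Q).Adj c d → (G \ P ⊔ Q).Reachable a c)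
    {a b : V} (hab : (G \ P ⊔ Q).Adj a b) :
    ∃ p : (G \ P ⊔ Q).Walk a a, p.IsCycle ∧ p.edgeSet = (G \ P ⊔ Q).edgeSet ∧
      p.length = G.edgeSet.ncard := by
  obtain ⟨p, hp, hpE⟩ := (hG.sdiff_sup hPG hGQ hPQ).exists_isCycle_edgeSet_eq hconn hab
  refine ⟨p, hp, hpE, ?_⟩
  rw [hp.isTrail.length_eq_ncard_edgeSet, hpE,
    ncard_edgeSet_eq_of_ncard_neighborSet_eq (ncard_neighborSet_sdiff_sup hPG hGQ hPQ)]

end SimpleGraph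

section Matching

variable {V ι : Type*} {Γ : SimpleGraph V} {M N N₁ N₂ : Finset (Sym2 V)}

theorem IsMatchingOn.eq_of_mem (hM : IsMatchingOn Γ M) {e f : Sym2 V} (he : e ∈ M) (hf : f ∈ M)
    {x : V} (hxe : x ∈ e) (hxf : x ∈ f) : e = f := by
  by_contra hef
  exact hM.2 e he f hf hef x hxe hxf

theorem IsMatchingOn.subset (hM : IsMatchingOn Γ M) (hNM : N ⊆ M) : IsMatchingOn Γ N :=
  ⟨fun e he => hM.1 e (hNM he), fun e he f hf => hM.2 e (hNM he) f (hNM hf)⟩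

theorem mVerts_union [DecidableEq V] : mVerts (M ∪ N) = mVerts M ∪ mVerts N := by
  ext x
  simp only [mVerts, Finset.mem_union, Set.mem_ofPred_eq, Set.mem_union, or_and_right, exists_or]

theorem mVerts_eq_range {u : ι → V} (hverts : ∀ e ∈ M, ∀ x ∈ e, ∃ i, x = u i)
    (hcover : ∀ i, ∃ e ∈ M, u i ∈ e) : mVerts M = Set.range u := by
  ext x
  constructor
  · rintro ⟨e, he, hxe⟩
    obtain ⟨i, rfl⟩ := hverts e he x hxe
    exact ⟨i, rfl⟩
  · rintro ⟨i, rfl⟩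
    exact hcover i

theorem mVerts_image_mk [Fintype ι] [DecidableEq V] (u v : ι → V) :
    mVerts (Finset.univ.image fun i => s(u i, v i)) = Set.range u ∪ Set.range v := by
  ext x
  simp [mVerts, Set.mem_range, eq_comm, exists_or]

theorem mVerts_subset_support {a b : V} {p : Γ.Walk a b} (hM : ↑M ⊆ p.edgeSet) :
    mVerts M ⊆ {x | x ∈ p.support} := by
  rintro x ⟨e, he, hxe⟩
  induction e using Sym2.ind with
  | _ y z =>
    rcases Sym2.mem_iff.mp hxe with rfl | rfl
    exacts [p.fst_mem_support_of_mem_edges (hM he), p.snd_mem_support_of_mem_edges (hM he)]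

theorem Finset.disjoint_of_disjoint_mVerts (h : Disjoint (mVerts N₁) (mVerts N₂)) :
    Disjoint N₁ N₂ := by
  refine Finset.disjoint_left.mpr fun e h₁ h₂ => ?_
  induction e using Sym2.ind with
  | _ x y => exact h.notMem_of_mem_left ⟨_, h₁, Sym2.mem_mk_left x y⟩ ⟨_, h₂, Sym2.mem_mk_left x y⟩

theorem IsMatchingOn.disjoint_mVerts (hM : IsMatchingOn Γ M) (h₁ : N₁ ⊆ M) (h₂ : N₂ ⊆ M)
    (h : Disjoint N₁ N₂) : Disjoint (mVerts N₁) (mVerts N₂) :=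
  Set.disjoint_left.mpr fun _ ⟨_, he, hxe⟩ ⟨_, hf, hxf⟩ =>
    Finset.disjoint_left.mp h he (hM.eq_of_mem (h₁ he) (h₂ hf) hxe hxf ▸ hf)

theorem IsMatchingOn.union [DecidableEq V] (hM : IsMatchingOn Γ M) (hN : IsMatchingOn Γ N)
    (hMN : Disjoint (mVerts M) (mVerts N)) : IsMatchingOn Γ (M ∪ N) := by
  refine ⟨fun e he => (Finset.mem_union.mp he).elim (hM.1 e) (hN.1 e), ?_⟩
  intro e he f hf hef x hxe hxf
  rcases Finset.mem_union.mp he with he | he <;> rcases Finset.mem_union.mp hf with hf | hf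
  · exact hM.2 e he f hf hef x hxe hxf
  · exact hMN.notMem_of_mem_left ⟨e, he, hxe⟩ ⟨f, hf, hxf⟩
  · exact hMN.notMem_of_mem_left ⟨f, hf, hxf⟩ ⟨e, he, hxe⟩
  · exact hN.2 e he f hf hef x hxe hxf

theorem IsMatchingOn.ncard_neighborSet (hM : IsMatchingOn Γ M) (x : V) :
    ((SimpleGraph.fromEdgeSet (M : Set (Sym2 V))).neighborSet x).ncard =
      (mVerts M).indicator 1 x := by
  by_cases hx : x ∈ mVerts M
  · rw [Set.indicator_of_mem hx, Pi.one_apply, Set.ncard_eq_one]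
    obtain ⟨e, he, hxe⟩ := hx
    obtain ⟨y, rfl⟩ := Sym2.mem_iff_exists.mp hxe
    have hxy : x ≠ y := fun h =>
      Γ.not_isDiag_of_mem_edgeSet (hM.1 _ he) (Sym2.mk_isDiag_iff.mpr h)
    refine ⟨y, Set.ext fun z => ⟨fun ⟨hz, _⟩ => ?_, fun hz => hz ▸ ⟨he, hxy⟩⟩⟩
    exact Sym2.congr_right.mp (hM.eq_of_mem hz he (Sym2.mem_mk_left _ _) hxe)
  · have hempty : (SimpleGraph.fromEdgeSet (M : Set (Sym2 V))).neighborSet x = ∅ :=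
      Set.eq_empty_of_forall_notMem fun y hy => hx ⟨_, hy.1, Sym2.mem_mk_left _ _⟩
    rw [Set.indicator_of_notMem hx, hempty, Set.ncard_empty]

end Matching

section Splice

open SimpleGraph

variable {V ι : Type*} {x0 x1 : V} {C0 : (⊤ : SimpleGraph V).Walk x0 x0}
  {C1 : (⊤ : SimpleGraph V).Walk x1 x1} {P0 P1 : Finset (Sym2 V)} {u v : ι → V}

theorem reachable_of_bridged [Nonempty ι] {H : SimpleGraph V}
    (hC0H : ∀ e ∈ C0.edges, e ∉ P0 → e ∈ H.edgeSet) (hC1H : ∀ e ∈ C1.edges, e ∉ P1 → e ∈ H.edgeSet)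
    (huv : ∀ i, H.Adj (u i) (v i)) (hP0u : mVerts P0 = Set.range u)
    (hP1v : mVerts P1 = Set.range v) (hu : ∀ i, u i ∈ C0.support) (hv : ∀ i, v i ∈ C1.support)
    (hbridge : ∀ i j, s(v i, v j) ∈ P1 → H.Reachable (u i) (u j)) {x y : V}
    (hx : x ∈ C0.support ∨ x ∈ C1.support) (hy : y ∈ C0.support ∨ y ∈ C1.support) :
    H.Reachable x y := by
  have hreach1 : ∀ {x y}, x ∈ C1.support → y ∈ C1.support → H.Reachable x y :=
    C1.reachable_of_mem_support fun x y he => by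
      by_cases hP : s(x, y) ∈ P1
      · obtain ⟨a, rfl⟩ : x ∈ Set.range v := hP1v ▸ ⟨_, hP, Sym2.mem_mk_left _ _⟩
        obtain ⟨b, rfl⟩ : y ∈ Set.range v := hP1v ▸ ⟨_, hP, Sym2.mem_mk_right _ _⟩
        exact (huv a).reachable.symm.trans ((hbridge a b hP).trans (huv b).reachable)
      · exact Adj.reachable (hC1H _ he hP)
  have hreach0 : ∀ {x y}, x ∈ C0.support → y ∈ C0.support → H.Reachable x y :=
    C0.reachable_of_mem_support fun x y he => by
      by_cases hP : s(x, y) ∈ P0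
      · obtain ⟨a, rfl⟩ : x ∈ Set.range u := hP0u ▸ ⟨_, hP, Sym2.mem_mk_left _ _⟩
        obtain ⟨b, rfl⟩ : y ∈ Set.range u := hP0u ▸ ⟨_, hP, Sym2.mem_mk_right _ _⟩
        exact (huv a).reachable.trans ((hreach1 (hv a) (hv b)).trans (huv b).reachable.symm)
      · exact Adj.reachable (hC0H _ he hP)
  obtain ⟨i⟩ := ‹Nonempty ι›
  have hfrom : ∀ {z}, z ∈ C0.support ∨ z ∈ C1.support → H.Reachable (v i) z := by
    rintro z (hz | hz)
    · exact (huv i).reachable.symm.trans (hreach0 (hu i) hz)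
    · exact hreach1 (hv i) hz
  exact (hfrom hx).symm.trans (hfrom hy)

variable [DecidableEq V] [Fintype ι]

theorem reachable_of_edgeSet_eq_splice [Nonempty ι] {H : SimpleGraph V}
    (hH : H.edgeSet = (C0.edgeSet ∪ C1.edgeSet) \ ↑(P0 ∪ P1) ∪
      ↑(Finset.univ.image fun i => s(u i, v i)))
    (hC01 : C0.support.Disjoint C1.support) (hP0C0 : ↑P0 ⊆ C0.edgeSet)
    (hP1C1 : ↑P1 ⊆ C1.edgeSet) (hP0u : mVerts P0 = Set.range u) (hP1v : mVerts P1 = Set.range v)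
    (hbridge : ∀ i j, s(v i, v j) ∈ P1 → i ≠ j →
      ∃ p : (⊤ : SimpleGraph V).Walk (u i) (u j), ∀ e ∈ p.edges, e ∈ C0.edges ∧ e ∉ P0)
    {a b c d : V} (hab : H.Adj a b) (hcd : H.Adj c d) : H.Reachable a c := by
  have hu : ∀ i, u i ∈ C0.support := fun i => mVerts_subset_support hP0C0 (hP0u ▸ ⟨i, rfl⟩)
  have hv : ∀ i, v i ∈ C1.support := fun i => mVerts_subset_support hP1C1 (hP1v ▸ ⟨i, rfl⟩)
  have hE01 := Walk.disjoint_edgeSet_of_disjoint_support hC01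
  have hC0H : ∀ e ∈ C0.edges, e ∉ P0 → e ∈ H.edgeSet := fun e he hP0e => by
    rw [hH, Finset.coe_union]
    exact .inl ⟨.inl he, fun h => h.elim hP0e fun h1 => hE01.notMem_of_mem_left he (hP1C1 h1)⟩
  have hC1H : ∀ e ∈ C1.edges, e ∉ P1 → e ∈ H.edgeSet := fun e he hP1e => by
    rw [hH, Finset.coe_union]
    exact .inl ⟨.inr he, fun h => h.elim (fun h0 => hE01.notMem_of_mem_right he (hP0C0 h0)) hP1e⟩
  have huv : ∀ i, H.Adj (u i) (v i) := fun i => by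
    rw [← mem_edgeSet, hH]
    exact .inr (Finset.mem_image_of_mem _ (Finset.mem_univ i))
  have hsupp : ∀ {x y}, H.Adj x y → x ∈ C0.support ∨ x ∈ C1.support := by
    intro x y hxy
    rw [← mem_edgeSet, hH] at hxy
    rcases hxy with ⟨h | h, -⟩ | h
    · exact .inl (C0.fst_mem_support_of_mem_edges h)
    · exact .inr (C1.fst_mem_support_of_mem_edges h)
    · obtain ⟨i, -, hi⟩ := Finset.mem_image.mp h
      rcases Sym2.mem_iff.mp (hi ▸ Sym2.mem_mk_left x y) with rfl | rfl
      exacts [.inl (hu i), .inr (hv i)]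
  have hbridgeH : ∀ i j, s(v i, v j) ∈ P1 → H.Reachable (u i) (u j) := fun i j hij => by
    rcases eq_or_ne i j with rfl | hne
    · rfl
    obtain ⟨p, hp⟩ := hbridge i j hij hne
    exact p.reachable_of_forall_edges fun x y hxy =>
      Adj.reachable (hC0H _ (hp _ hxy).1 (hp _ hxy).2)
  exact reachable_of_bridged hC0H hC1H huv hP0u hP1v hu hv hbridgeH (hsupp hab) (hsupp hcd)

theorem exists_isCycle_splice [Finite V] [Nonempty ι]
    (hC0 : C0.IsCycle) (hC1 : C1.IsCycle) (hC01 : C0.support.Disjoint C1.support)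
    (hP0C0 : ↑P0 ⊆ C0.edgeSet) (hP1C1 : ↑P1 ⊆ C1.edgeSet)
    (hP0 : IsMatchingOn ⊤ P0) (hP1 : IsMatchingOn ⊤ P1)
    (hR : IsMatchingOn ⊤ (Finset.univ.image fun i => s(u i, v i)))
    (hP0u : mVerts P0 = Set.range u) (hP1v : mVerts P1 = Set.range v)
    (hbridge : ∀ i j, s(v i, v j) ∈ P1 → i ≠ j →
      ∃ p : (⊤ : SimpleGraph V).Walk (u i) (u j), ∀ e ∈ p.edges, e ∈ C0.edges ∧ e ∉ P0) :
    ∃ (w : V) (C : (⊤ : SimpleGraph V).Walk w w), C.IsCycle ∧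
      C.edgeSet = (C0.edgeSet ∪ C1.edgeSet) \ ↑(P0 ∪ P1) ∪
        ↑(Finset.univ.image fun i => s(u i, v i)) ∧
      C.length = C0.length + C1.length := by
  set R := Finset.univ.image fun i => s(u i, v i)
  set G := C0.toSubgraph.spanningCoe ⊔ C1.toSubgraph.spanningCoe
  set P := fromEdgeSet (↑(P0 ∪ P1) : Set (Sym2 V))
  set Q := fromEdgeSet (↑R : Set (Sym2 V))
  have hC01' : Disjoint {x | x ∈ C0.support} {x | x ∈ C1.support} :=
    Set.disjoint_left.mpr fun _ h0 h1 => hC01 h0 h1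
  have hGE : G.edgeSet = C0.edgeSet ∪ C1.edgeSet := by
    simp only [G, edgeSet_sup, Subgraph.edgeSet_spanningCoe, Walk.edgeSet_toSubgraph]
  have hG : G.IsCycles := hC0.isCycles_spanningCoe_toSubgraph.sup
    hC1.isCycles_spanningCoe_toSubgraph <| Set.disjoint_of_subset
      C0.support_spanningCoe_toSubgraph_subset C1.support_spanningCoe_toSubgraph_subset hC01'
  have hPG : P ≤ G := by
    rw [fromEdgeSet_le, hGE, Finset.coe_union]
    exact Set.sdiff_subset.trans (Set.union_subset_union hP0C0 hP1C1)
  have hGQ : Disjoint G Q := by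
    rw [disjoint_fromEdgeSet, hGE, Set.disjoint_right]
    intro e he
    obtain ⟨i, -, rfl⟩ := Finset.mem_image.mp he
    exact Walk.mk_notMem_edgeSet_union_of_disjoint_support hC01
      (mVerts_subset_support hP0C0 (hP0u ▸ ⟨i, rfl⟩))
      (mVerts_subset_support hP1C1 (hP1v ▸ ⟨i, rfl⟩))
  have hPQ : ∀ x, (P.neighborSet x).ncard = (Q.neighborSet x).ncard := fun x => by
    rw [(hP0.union hP1 _).ncard_neighborSet, hR.ncard_neighborSet, mVerts_union, hP0u, hP1v,
      mVerts_image_mk]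
    exact Set.disjoint_of_subset (mVerts_subset_support hP0C0) (mVerts_subset_support hP1C1) hC01'
  have hHE : (G \ P ⊔ Q).edgeSet = (C0.edgeSet ∪ C1.edgeSet) \ ↑(P0 ∪ P1) ∪ ↑R := by
    rw [edgeSet_sdiff_fromEdgeSet_sup_fromEdgeSet, hGE]
    rw [← Set.subset_compl_iff_disjoint_right, ← edgeSet_top]
    exact hR.1
  have hrung : (G \ P ⊔ Q).Adj (u (Classical.arbitrary ι)) (v (Classical.arbitrary ι)) := by
    rw [← mem_edgeSet, hHE]
    exact .inr (Finset.mem_image_of_mem _ (Finset.mem_univ _))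
  obtain ⟨C, hC, hCE, hlen⟩ := hG.exists_isCycle_sdiff_sup hPG hGQ hPQ
    (fun _ _ _ _ => reachable_of_edgeSet_eq_splice hHE hC01 hP0C0 hP1C1 hP0u hP1v hbridge) hrung
  refine ⟨_, C.mapLe le_top, hC.mapLe le_top, by rw [Walk.edgeSet_mapLe_eq_edgeSet, hCE, hHE], ?_⟩
  rw [Walk.length_mapLe, hlen, hGE, hC0.isTrail.ncard_edgeSet_union hC1.isTrail hC01]

end Splice

theorem Finset.subset_and_sdiff_subset_of_eq_splice {α : Type*} [DecidableEq α]
    {E M M0 M1 P0 P1 S0 S1 : Finset α} (hM01 : M0 ∪ M1 ⊆ M) (hMP : Disjoint (M0 ∪ M1) (P0 ∪ P1))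
    (hE : E = (M0 ∪ P0 ∪ S0 ∪ (M1 ∪ P1 ∪ S1)) \ (P0 ∪ P1) ∪ M \ (M0 ∪ M1)) :
    M ⊆ E ∧ E \ M ⊆ S0 ∪ S1 := by
  subst hE
  simp only [Finset.subset_iff, Finset.mem_sdiff, Finset.mem_union, Finset.disjoint_left] at *
  grind

theorem d_extension_yields_cycle_general
    (n : ℕ) (d : Fin n)
    (M : Finset (Sym2 (Vtx n))) (hM : IsMatchingOn (⊤ : SimpleGraph (Vtx n)) M)
    (M0 M1 : Finset (Sym2 (Vtx n)))
    (hM0 : ∀ e, e ∈ M0 ↔ e ∈ M ∧ ∀ x ∈ e, x d = false)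
    (hM1 : ∀ e, e ∈ M1 ↔ e ∈ M ∧ ∀ x ∈ e, x d = true)
    (k : ℕ) (hk2 : 2 ≤ k)
    (u v : Fin k → Vtx n)
    (hM2 : M \ (M0 ∪ M1) = Finset.image (fun i : Fin k => s(u i, v i)) Finset.univ)
    -- (i): P⁰ is a perfect matching of the complete graph on {u₁,…,u_k},
    -- and C⁰ is a cycle in K(Q⁰) with E(C⁰) = M⁰ ∪ P⁰ ∪ S⁰, S⁰ ⊆ E(Q⁰)
    (P0 : Finset (Sym2 (Vtx n)))
    (hP0match : IsMatchingOn (⊤ : SimpleGraph (Vtx n)) P0)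
    (hP0verts : ∀ e ∈ P0, ∀ x ∈ e, ∃ i, x = u i)
    (hP0perf : ∀ i, ∃ e ∈ P0, u i ∈ e)
    (x0 : Vtx n) (C0 : (⊤ : SimpleGraph (Vtx n)).Walk x0 x0) (hC0 : C0.IsCycle)
    (hC0verts : ∀ x ∈ C0.support, x d = false)
    (S0 : Finset (Sym2 (Vtx n)))
    (hS0 : ∀ e ∈ S0, e ∈ (cube n).edgeSet ∧ ∀ x ∈ e, x d = false)
    (hC0edges : C0.edges.toFinset = M0 ∪ P0 ∪ S0)
    -- (ii): P¹ is a perfect matching of the complete graph on {v₁,…,v_k} such that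
    -- for every edge vᵢvⱼ ∈ P¹, the vertices uᵢ and uⱼ are the two endpoints of a
    -- common path component of the graph obtained from C⁰ by deleting the edges of P⁰
    (P1 : Finset (Sym2 (Vtx n)))
    (hP1match : IsMatchingOn (⊤ : SimpleGraph (Vtx n)) P1)
    (hP1verts : ∀ e ∈ P1, ∀ x ∈ e, ∃ i, x = v i)
    (hP1perf : ∀ i, ∃ e ∈ P1, v i ∈ e)
    (hP1path : ∀ i j : Fin k, s(v i, v j) ∈ P1 → i ≠ j →
      (∃ p : (⊤ : SimpleGraph (Vtx n)).Walk (u i) (u j), p.IsPath ∧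
        ∀ e ∈ p.edges, e ∈ C0.edges ∧ e ∉ P0) ∧
      (C0.edges.toFinset.filter (fun e => e ∉ P0 ∧ u i ∈ e)).card ≤ 1 ∧
      (C0.edges.toFinset.filter (fun e => e ∉ P0 ∧ u j ∈ e)).card ≤ 1)
    -- (iii): C¹ is a cycle in K(Q¹) with E(C¹) = M¹ ∪ P¹ ∪ S¹, S¹ ⊆ E(Q¹)
    (x1 : Vtx n) (C1 : (⊤ : SimpleGraph (Vtx n)).Walk x1 x1) (hC1 : C1.IsCycle)
    (hC1verts : ∀ x ∈ C1.support, x d = true)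
    (S1 : Finset (Sym2 (Vtx n)))
    (hS1 : ∀ e ∈ S1, e ∈ (cube n).edgeSet ∧ ∀ x ∈ e, x d = true)
    (hC1edges : C1.edges.toFinset = M1 ∪ P1 ∪ S1) :
    ∃ S : Finset (Sym2 (Vtx n)), (∀ e ∈ S, e ∈ (cube n).edgeSet) ∧
      ∃ (w : Vtx n) (C : (⊤ : SimpleGraph (Vtx n)).Walk w w), C.IsCycle ∧
        C.edges.toFinset = M ∪ S ∧ C.length = C0.length + C1.length := by
  have : Nonempty (Fin k) := ⟨⟨0, by omega⟩⟩
  have hE0 : C0.edgeSet = ↑(M0 ∪ P0 ∪ S0) := by rw [← C0.coe_edges_toFinset, hC0edges]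
  have hE1 : C1.edgeSet = ↑(M1 ∪ P1 ∪ S1) := by rw [← C1.coe_edges_toFinset, hC1edges]
  have hC01 : C0.support.Disjoint C1.support := fun x h0 h1 => by
    simpa [hC0verts x h0] using hC1verts x h1
  have hP0u := mVerts_eq_range hP0verts hP0perf
  have hP1v := mVerts_eq_range hP1verts hP1perf
  have hM01 : M0 ∪ M1 ⊆ M := Finset.union_subset (fun e he => ((hM0 e).mp he).1)
    (fun e he => ((hM1 e).mp he).1)
  -- `M⁰ ∪ M¹` and the rungs are disjoint parts of the matching `M`, and the rungs cover the
  -- vertices of `P⁰ ∪ P¹`.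
  have hMP : Disjoint (M0 ∪ M1) (P0 ∪ P1) := by
    refine Finset.disjoint_of_disjoint_mVerts ?_
    rw [mVerts_union (M := P0), hP0u, hP1v, ← mVerts_image_mk, ← hM2]
    exact hM.disjoint_mVerts hM01 Finset.sdiff_subset Finset.disjoint_sdiff
  obtain ⟨w, C, hC, hCE, hlen⟩ := exists_isCycle_splice hC0 hC1 hC01
    (hE0 ▸ Finset.coe_subset.mpr (Finset.subset_union_right.trans Finset.subset_union_left))
    (hE1 ▸ Finset.coe_subset.mpr (Finset.subset_union_right.trans Finset.subset_union_left))
    hP0match hP1match (hM.subset (hM2 ▸ Finset.sdiff_subset)) hP0u hP1v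
    fun i j h hij => let ⟨p, _, hp⟩ := (hP1path i j h hij).1; ⟨p, hp⟩
  have hCE' : C.edges.toFinset = (M0 ∪ P0 ∪ S0 ∪ (M1 ∪ P1 ∪ S1)) \ (P0 ∪ P1) ∪ M \ (M0 ∪ M1) := by
    rw [← Finset.coe_inj, C.coe_edges_toFinset, hCE, ← hM2, hE0, hE1]
    simp only [Finset.coe_union, Finset.coe_sdiff]
  obtain ⟨hMC, hSC⟩ := Finset.subset_and_sdiff_subset_of_eq_splice hM01 hMP hCE'
  refine ⟨C.edges.toFinset \ M, fun e he => ?_, w, C, hC,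
    (Finset.union_sdiff_of_subset hMC).symm, hlen⟩
  rcases Finset.mem_union.mp (hSC he) with h | h
  exacts [(hS0 e h).1, (hS1 e h).1]

theorem d_extension_yields_cycle
    (n : ℕ) (hn : 2 ≤ n) (d : Fin n)
    (M : Finset (Sym2 (Vtx n))) (hM : IsMatchingOn (⊤ : SimpleGraph (Vtx n)) M)
    (M0 M1 : Finset (Sym2 (Vtx n)))
    (hM0 : ∀ e, e ∈ M0 ↔ e ∈ M ∧ ∀ x ∈ e, x d = false)
    (hM1 : ∀ e, e ∈ M1 ↔ e ∈ M ∧ ∀ x ∈ e, x d = true)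
    (k : ℕ) (hkeven : Even k) (hk2 : 2 ≤ k)
    (u v : Fin k → Vtx n)
    (hu : ∀ i, u i d = false) (hv : ∀ i, v i d = true)
    (hinj : Function.Injective (fun i : Fin k => s(u i, v i)))
    (hM2 : M \ (M0 ∪ M1) = Finset.image (fun i : Fin k => s(u i, v i)) Finset.univ)
    -- (i): P⁰ is a perfect matching of the complete graph on {u₁,…,u_k},
    -- and C⁰ is a cycle in K(Q⁰) with E(C⁰) = M⁰ ∪ P⁰ ∪ S⁰, S⁰ ⊆ E(Q⁰)
    (P0 : Finset (Sym2 (Vtx n)))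
    (hP0match : IsMatchingOn (⊤ : SimpleGraph (Vtx n)) P0)
    (hP0verts : ∀ e ∈ P0, ∀ x ∈ e, ∃ i, x = u i)
    (hP0perf : ∀ i, ∃ e ∈ P0, u i ∈ e)
    (x0 : Vtx n) (C0 : (⊤ : SimpleGraph (Vtx n)).Walk x0 x0) (hC0 : C0.IsCycle)
    (hC0verts : ∀ x ∈ C0.support, x d = false)
    (S0 : Finset (Sym2 (Vtx n)))
    (hS0 : ∀ e ∈ S0, e ∈ (cube n).edgeSet ∧ ∀ x ∈ e, x d = false)
    (hC0edges : C0.edges.toFinset = M0 ∪ P0 ∪ S0)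
    -- (ii): P¹ is a perfect matching of the complete graph on {v₁,…,v_k} such that
    -- for every edge vᵢvⱼ ∈ P¹, the vertices uᵢ and uⱼ are the two endpoints of a
    -- common path component of the graph obtained from C⁰ by deleting the edges of P⁰
    (P1 : Finset (Sym2 (Vtx n)))
    (hP1match : IsMatchingOn (⊤ : SimpleGraph (Vtx n)) P1)
    (hP1verts : ∀ e ∈ P1, ∀ x ∈ e, ∃ i, x = v i)
    (hP1perf : ∀ i, ∃ e ∈ P1, v i ∈ e)
    (hP1path : ∀ i j : Fin k, s(v i, v j) ∈ P1 → i ≠ j →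
      (∃ p : (⊤ : SimpleGraph (Vtx n)).Walk (u i) (u j), p.IsPath ∧
        ∀ e ∈ p.edges, e ∈ C0.edges ∧ e ∉ P0) ∧
      (C0.edges.toFinset.filter (fun e => e ∉ P0 ∧ u i ∈ e)).card ≤ 1 ∧
      (C0.edges.toFinset.filter (fun e => e ∉ P0 ∧ u j ∈ e)).card ≤ 1)
    -- (iii): C¹ is a cycle in K(Q¹) with E(C¹) = M¹ ∪ P¹ ∪ S¹, S¹ ⊆ E(Q¹)
    (x1 : Vtx n) (C1 : (⊤ : SimpleGraph (Vtx n)).Walk x1 x1) (hC1 : C1.IsCycle)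
    (hC1verts : ∀ x ∈ C1.support, x d = true)
    (S1 : Finset (Sym2 (Vtx n)))
    (hS1 : ∀ e ∈ S1, e ∈ (cube n).edgeSet ∧ ∀ x ∈ e, x d = true)
    (hC1edges : C1.edges.toFinset = M1 ∪ P1 ∪ S1) :
    ∃ S : Finset (Sym2 (Vtx n)), (∀ e ∈ S, e ∈ (cube n).edgeSet) ∧
      ∃ (w : Vtx n) (C : (⊤ : SimpleGraph (Vtx n)).Walk w w), C.IsCycle ∧
        C.edges.toFinset = M ∪ S ∧ C.length = C0.length + C1.length :=
  d_extension_yields_cycle_general n d M hM M0 M1 hM0 hM1 k hk2 u v hM2 P0 hP0match hP0verts hP0perf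
    x0 C0 hC0 hC0verts S0 hS0 hC0edges P1 hP1match hP1verts hP1perf hP1path x1 C1 hC1 hC1verts S1
    hS1 hC1edges
end
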